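/- For γ = 2 and 0 < α < 1, the Bessel–Riesz fractional derivative of the normalized Bessel function j_{1/2}(x) = sin(x)/x equals B^α_2 j_{1/2}(x) = (2^{2α} Γ(3/2 + α) Γ(1/2 + α)/(Γ(3/2) Γ(2α+2))) · sin(x)/x. -/

import Mathlib

/-!
For `γ = 2` the weight `sin φ` makes the integrand of the generalized translation of
`j(s) = sin s / s` an exact derivative in `φ`, which gives `T^t_x j = j(x) j(t)` for `t ≠ |x|`.
The derivative is then `j(x)` times `∫₀^∞ (1 - j(t)) t^{-1-2α} dt`. Writing
`Γ(a) t^{-a} = ∫₀^∞ u^{a-1} e^{-tu} du` and exchanging the integrals turns this into a Mellin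
transform of the Laplace transform `1 / (u²(1 + u²))` of `t - sin t`. After `u² = v` the same
exchange, applied to `e^{-t}`, gives
`∫₀^∞ v^{β-1} / (1 + v) dv = Γ(β) Γ(1 - β) = π / sin (πβ)`.
-/

open MeasureTheory Real

/-- Normalizing constant of the generalized translation. -/
noncomputable def Cgamma (γ : ℝ) : ℝ :=
  Real.Gamma ((γ + 1) / 2) / (Real.sqrt Real.pi * Real.Gamma (γ / 2))

/-- Generalized translation operator `^γT^y_x f(x)`. -/
noncomputable def genTranslation (γ : ℝ) (f : ℝ → ℝ) (x y : ℝ) : ℝ :=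
  Cgamma γ *
    ∫ φ in (0:ℝ)..Real.pi,
      f (Real.sqrt (x ^ 2 + y ^ 2 - 2 * x * y * Real.cos φ)) * Real.sin φ ^ (γ - 1)

/-- The normalizing constant `d_{1,γ}(α)` of the Bessel–Riesz fractional derivative. -/
noncomputable def dConst (γ α : ℝ) : ℝ :=
  Real.pi * Real.Gamma ((γ + 1) / 2) /
    ((2 : ℝ) ^ (2 * α + 1) * Real.Gamma ((1 + γ) / 2 + α) * Real.Gamma (1/2 + α)) *
    (1 / Real.sin (α * Real.pi))

open Set Filter Function

theorem Gamma_three_div_two : Gamma (3 / 2) = √π / 2 := by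
  rw [show (3 : ℝ) / 2 = 1 / 2 + 1 by norm_num, Gamma_add_one (by norm_num), Gamma_one_half_eq]
  ring

theorem Cgamma_two : Cgamma 2 = 1 / 2 := by
  have hπ : √π ≠ 0 := by positivity
  rw [Cgamma, show ((2 : ℝ) + 1) / 2 = 3 / 2 by norm_num, div_self two_ne_zero, Gamma_one,
    Gamma_three_div_two]
  field_simp

theorem sq_add_sq_sub_two_mul_mul_cos_pos {x t : ℝ} (h : |x| ≠ |t|) (φ : ℝ) :
    0 < x ^ 2 + t ^ 2 - 2 * x * t * cos φ := by
  have hcos : x * t * cos φ ≤ |x| * |t| :=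
    calc x * t * cos φ ≤ |x * t * cos φ| := le_abs_self _
      _ = |x| * |t| * |cos φ| := by rw [abs_mul, abs_mul]
      _ ≤ |x| * |t| := mul_le_of_le_one_right (by positivity) (abs_cos_le_one φ)
  have hsq : 0 < (|x| - |t|) ^ 2 := by have := sub_ne_zero.2 h; positivity
  nlinarith [sq_abs x, sq_abs t]

theorem genTranslation_two_sinc {x t : ℝ} (hx : x ≠ 0) (ht : t ≠ 0) (hxt : |x| ≠ |t|) :
    genTranslation 2 (fun s => sin s / s) x t = sin x / x * (sin t / t) := by
  set r : ℝ → ℝ := fun φ => √(x ^ 2 + t ^ 2 - 2 * x * t * cos φ)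
  have hr (φ : ℝ) : 0 < r φ := sqrt_pos.2 (sq_add_sq_sub_two_mul_mul_cos_pos hxt φ)
  -- `r r' = x t sin φ`, as `r ^ 2 = x ^ 2 + t ^ 2 - 2 x t cos φ`
  have hderiv (φ : ℝ) :
      HasDerivAt (fun φ => -cos (r φ) / (x * t)) (sin (r φ) / r φ * sin φ) φ := by
    have hr' := (((hasDerivAt_cos φ).const_mul (2 * x * t)).const_sub (x ^ 2 + t ^ 2)).sqrt
      (sq_add_sq_sub_two_mul_mul_cos_pos hxt φ).ne'
    refine (((hasDerivAt_cos (r φ)).comp φ hr').neg.div_const (x * t)).congr_deriv ?_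
    change -(-sin (r φ) * (-(2 * x * t * -sin φ) / (2 * r φ))) / (x * t) = _
    have := (hr φ).ne'
    field_simp
  have hcont : Continuous fun φ => sin (r φ) / r φ * sin φ :=
    ((by fun_prop : Continuous fun φ => sin (r φ)).div (by fun_prop) fun φ => (hr φ).ne').mul
      continuous_sin
  have hr0 : r 0 = |x - t| := by simp only [r, cos_zero]; rw [← sqrt_sq_eq_abs]; ring_nf
  have hrπ : r π = |x + t| := by simp only [r, cos_pi]; rw [← sqrt_sq_eq_abs]; ring_nf
  rw [genTranslation, Cgamma_two, show (2 : ℝ) - 1 = 1 by norm_num]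
  simp only [rpow_one]
  rw [intervalIntegral.integral_eq_sub_of_hasDerivAt (fun φ _ => hderiv φ)
    (hcont.intervalIntegrable _ _), hrπ, hr0, cos_abs, cos_abs, cos_add, cos_sub]
  field_simp
  ring

noncomputable def laplaceTransform (f : ℝ → ℝ) (u : ℝ) : ℝ :=
  ∫ t in Ioi 0, f t * exp (-(u * t))

theorem integral_rpow_mul_laplaceTransform {a : ℝ} (ha : 0 < a) {f : ℝ → ℝ}
    (hf : IntegrableOn (fun t => f t * t ^ (-a)) (Ioi 0)) :
    ∫ u in Ioi 0, u ^ (a - 1) * laplaceTransform f u =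
      Gamma a * ∫ t in Ioi 0, f t * t ^ (-a) := by
  set μ := volume.restrict (Ioi (0:ℝ))
  set k : ℝ → ℝ → ℝ := fun t u => u ^ (a - 1) * exp (-(u * t))
  have hk_integral (t : ℝ) (ht : 0 < t) : ∫ u, k t u ∂μ = Gamma a * t ^ (-a) := by
    simp only [k, mul_comm _ t]
    rw [integral_rpow_mul_exp_neg_mul_Ioi ha ht, one_div, inv_rpow ht.le, rpow_neg ht.le, mul_comm]
  have hk_integrable (t : ℝ) (ht : 0 < t) : IntegrableOn (k t) (Ioi 0) := by
    simpa [k, rpow_one, mul_comm _ t] using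
      integrableOn_rpow_mul_exp_neg_mul_rpow (s := a - 1) (by linarith) one_pos ht
  have hf_meas : AEStronglyMeasurable f μ := by
    refine (hf.aestronglyMeasurable.mul (measurable_id.pow_const a).aestronglyMeasurable).congr ?_
    filter_upwards [ae_restrict_mem measurableSet_Ioi] with t ht
    simp [mul_assoc, ← rpow_add ht]
  have hF_meas : AEStronglyMeasurable (uncurry fun t u => f t * k t u) (μ.prod μ) :=
    hf_meas.comp_fst.mul ((measurable_snd.pow_const _).mul
      (measurable_snd.mul measurable_fst).neg.exp).aestronglyMeasurable
  have hF : Integrable (uncurry fun t u => f t * k t u) (μ.prod μ) := by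
    refine (integrable_prod_iff hF_meas).2 ⟨?_, ?_⟩
    · filter_upwards [ae_restrict_mem measurableSet_Ioi] with t ht
      exact (hk_integrable t ht).const_mul (f t)
    · refine (hf.norm.const_mul (Gamma a)).congr ?_
      filter_upwards [ae_restrict_mem measurableSet_Ioi] with t ht
      have hk_norm : ∀ᵐ u ∂μ, ‖f t * k t u‖ = ‖f t‖ * k t u := by
        filter_upwards [ae_restrict_mem measurableSet_Ioi] with u hu
        have hu : 0 < u := hu
        rw [norm_mul, Real.norm_of_nonneg (r := k t u) (by positivity)]
      rw [uncurry_def, integral_congr_ae hk_norm, integral_const_mul, hk_integral t ht, norm_mul,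
        Real.norm_of_nonneg (rpow_pos_of_pos ht _).le]
      ring
  calc ∫ u, u ^ (a - 1) * laplaceTransform f u ∂μ = ∫ u, ∫ t, f t * k t u ∂μ ∂μ := by
        refine integral_congr_ae (Eventually.of_forall fun u => ?_)
        simp only [laplaceTransform, k, ← integral_const_mul]
        congr 1 with t
        ring
    _ = ∫ t, ∫ u, f t * k t u ∂μ ∂μ := (integral_integral_swap hF).symm
    _ = ∫ t, Gamma a * (f t * t ^ (-a)) ∂μ := by
        refine integral_congr_ae ?_
        filter_upwards [ae_restrict_mem measurableSet_Ioi] with t ht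
        rw [integral_const_mul, hk_integral t ht]
        ring
    _ = Gamma a * ∫ t in Ioi 0, f t * t ^ (-a) := integral_const_mul _ _

theorem laplaceTransform_exp_neg {u : ℝ} (hu : -1 < u) :
    laplaceTransform (fun t => exp (-t)) u = 1 / (1 + u) := by
  have h : ∀ t : ℝ, exp (-t) * exp (-(u * t)) = exp (-(1 + u) * t) := fun t => by
    rw [← exp_add]; ring_nf
  simp only [laplaceTransform, h]
  rw [integral_exp_mul_Ioi (by linarith), mul_zero, exp_zero]
  field_simp

theorem integral_rpow_div_one_add {β : ℝ} (hβ : 0 < β) (hβ' : β < 1) :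
    ∫ v in Ioi 0, v ^ (β - 1) / (1 + v) = π / sin (π * β) := by
  have hf : IntegrableOn (fun t => exp (-t) * t ^ (-β)) (Ioi 0) := by
    simpa using GammaIntegral_convergent (s := 1 - β) (by linarith)
  have h := integral_rpow_mul_laplaceTransform hβ hf
  rw [← Gamma_mul_Gamma_one_sub, Gamma_eq_integral (s := 1 - β) (by linarith),
    sub_sub_cancel_left, ← h]
  refine setIntegral_congr_fun measurableSet_Ioi fun v hv => ?_
  rw [laplaceTransform_exp_neg (by linarith [mem_Ioi.mp hv]), mul_one_div]

theorem integral_rpow_div_one_add_sq {β : ℝ} (hβ : 0 < β) (hβ' : β < 1) :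
    ∫ u in Ioi 0, u ^ (2 * β - 1) / (1 + u ^ 2) = π / (2 * sin (π * β)) := by
  have h := integral_comp_rpow_Ioi_of_pos (g := fun v => v ^ (β - 1) / (1 + v)) two_pos
  rw [integral_rpow_div_one_add hβ hβ'] at h
  rw [show π / (2 * sin (π * β)) = π / sin (π * β) / 2 by ring, ← h, ← integral_div]
  refine setIntegral_congr_fun measurableSet_Ioi fun u hu => ?_
  have hu : 0 < u := hu
  rw [smul_eq_mul, ← rpow_mul hu.le, show (2:ℝ) - 1 = 1 by norm_num, rpow_one, rpow_two,
    show 2 * β - 1 = 1 + 2 * (β - 1) by ring, rpow_add hu, rpow_one]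
  ring

theorem integrableOn_mul_exp_neg_mul {u : ℝ} (hu : 0 < u) :
    IntegrableOn (fun t => t * exp (-(u * t))) (Ioi 0) := by
  simpa [rpow_one] using integrableOn_rpow_mul_exp_neg_mul_rpow (s := 1) (by norm_num) one_pos hu

theorem integral_mul_exp_neg_mul_Ioi {u : ℝ} (hu : 0 < u) :
    ∫ t in Ioi 0, t * exp (-(u * t)) = 1 / u ^ 2 := by
  have h := integral_rpow_mul_exp_neg_mul_Ioi (a := 2) two_pos hu
  norm_num [Gamma_two] at h
  simpa using h

theorem integrableOn_sin_mul_exp_neg_mul {u : ℝ} (hu : 0 < u) :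
    IntegrableOn (fun t => sin t * exp (-(u * t))) (Ioi 0) := by
  refine (integrableOn_exp_mul_Ioi (a := -u) (by linarith) 0).mono'
    (by fun_prop : Continuous fun t => sin t * exp (-(u * t))).aestronglyMeasurable
    (Eventually.of_forall fun t => ?_)
  rw [norm_mul, Real.norm_of_nonneg (exp_pos _).le, neg_mul]
  exact mul_le_of_le_one_left (exp_pos _).le (abs_sin_le_one t)

theorem integral_sin_mul_exp_neg_mul_Ioi {u : ℝ} (hu : 0 < u) :
    ∫ t in Ioi 0, sin t * exp (-(u * t)) = 1 / (1 + u ^ 2) := by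
  have him : ∀ t : ℝ, sin t * exp (-(u * t)) = (Complex.exp ((-u + Complex.I) * t)).im := by
    intro t
    simp [Complex.exp_im, mul_comm]
  have hre : (-u + Complex.I).re < 0 := by simpa using hu
  simp_rw [him]
  rw [← RCLike.im_eq_complex_im, integral_im (integrableOn_exp_mul_complex_Ioi hre 0),
    RCLike.im_eq_complex_im, integral_exp_mul_complex_Ioi hre]
  simp [Complex.div_im, Complex.normSq]
  ring

theorem laplaceTransform_sub_sin {u : ℝ} (hu : 0 < u) :
    laplaceTransform (fun t => t - sin t) u = 1 / (u ^ 2 * (1 + u ^ 2)) := by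
  simp only [laplaceTransform, sub_mul]
  rw [integral_sub (integrableOn_mul_exp_neg_mul hu) (integrableOn_sin_mul_exp_neg_mul hu),
    integral_mul_exp_neg_mul_Ioi hu, integral_sin_mul_exp_neg_mul_Ioi hu]
  field_simp
  ring

theorem integrableOn_sub_sin_mul_rpow_neg {a : ℝ} (h2 : 2 < a) (h4 : a < 4) :
    IntegrableOn (fun t => (t - sin t) * t ^ (-a)) (Ioi 0) := by
  have hcont : ContinuousOn (fun t => (t - sin t) * t ^ (-a)) (Ioi 0) := fun t ht =>
    ((continuous_id.sub continuous_sin).continuousAt.mul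
      (continuousAt_rpow_const t (-a) (Or.inl (ne_of_gt ht)))).continuousWithinAt
  have hnorm (t : ℝ) (ht : 0 < t) : ‖(t - sin t) * t ^ (-a)‖ = (t - sin t) * t ^ (-a) :=
    Real.norm_of_nonneg (mul_nonneg (sub_nonneg.2 (sin_le ht.le)) (rpow_pos_of_pos ht _).le)
  rw [← Ioc_union_Ioi_eq_Ioi zero_le_one]
  refine IntegrableOn.union ?_ ?_
  · have hg : IntegrableOn (fun t : ℝ => t ^ (3 - a) / 6) (Ioc 0 1) :=
      ((intervalIntegrable_iff_integrableOn_Ioc_of_le zero_le_one).1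
        (intervalIntegral.intervalIntegrable_rpow' (by linarith))).div_const 6
    refine hg.mono' ((hcont.mono Ioc_subset_Ioi_self).aestronglyMeasurable measurableSet_Ioc)
      ((ae_restrict_iff' measurableSet_Ioc).2 (Eventually.of_forall fun t ht => ?_))
    have ht0 : 0 < t := ht.1
    rw [hnorm t ht0, rpow_sub ht0, rpow_neg ht0.le, rpow_ofNat]
    calc (t - sin t) * (t ^ a)⁻¹ ≤ t ^ 3 / 6 * (t ^ a)⁻¹ := by
          gcongr
          linarith [sin_gt_sub_cube ht0]
      _ = t ^ 3 / t ^ a / 6 := by ring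
  · have hg : IntegrableOn (fun t : ℝ => 2 * t ^ (1 - a)) (Ioi 1) :=
      (integrableOn_Ioi_rpow_of_lt (by linarith) one_pos).const_mul 2
    refine hg.mono'
      ((hcont.mono (Ioi_subset_Ioi zero_le_one)).aestronglyMeasurable measurableSet_Ioi)
      ((ae_restrict_iff' measurableSet_Ioi).2 (Eventually.of_forall fun t ht => ?_))
    have ht0 : 0 < t := one_pos.trans ht
    rw [hnorm t ht0, rpow_sub ht0, rpow_neg ht0.le, rpow_one]
    calc (t - sin t) * (t ^ a)⁻¹ ≤ 2 * t * (t ^ a)⁻¹ := by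
          gcongr
          linarith [neg_one_le_sin t, mem_Ioi.mp ht]
      _ = 2 * (t / t ^ a) := by ring

theorem integral_one_sub_sinc_div_rpow {α : ℝ} (hα : 0 < α) (hα' : α < 1) :
    ∫ t in Ioi 0, (1 - sin t / t) / t ^ (1 + 2 * α) =
      π / (2 * sin (π * α) * Gamma (2 * α + 2)) := by
  have h := integral_rpow_mul_laplaceTransform (by linarith)
    (integrableOn_sub_sin_mul_rpow_neg (a := 2 * α + 2) (by linarith) (by linarith))
  have hK : ∫ u in Ioi 0, u ^ (2 * α + 2 - 1) * laplaceTransform (fun t => t - sin t) u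
      = π / (2 * sin (π * α)) := by
    rw [← integral_rpow_div_one_add_sq hα hα']
    refine setIntegral_congr_fun measurableSet_Ioi fun u hu => ?_
    have hu : 0 < u := hu
    rw [laplaceTransform_sub_sin hu, show 2 * α + 2 - 1 = 2 * α - 1 + 2 by ring, rpow_add hu,
      rpow_two]
    field_simp
  have hI : ∫ t in Ioi 0, (1 - sin t / t) / t ^ (1 + 2 * α)
      = ∫ t in Ioi 0, (t - sin t) * t ^ (-(2 * α + 2)) := by
    refine setIntegral_congr_fun measurableSet_Ioi fun t ht => ?_
    have ht : 0 < t := ht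
    rw [show -(2 * α + 2) = -1 + -(1 + 2 * α) by ring, rpow_add ht (-1), rpow_neg_one,
      rpow_neg ht.le]
    field_simp
  rw [hI, ← div_div, eq_div_iff (Gamma_pos_of_pos (by linarith)).ne', mul_comm, ← h, hK]

theorem besselRiesz_deriv_j_half (α : ℝ) (hα : 0 < α) (hα' : α < 1) (x : ℝ) (hx : x ≠ 0) :
    (1 / dConst 2 α) *
        ∫ t in Set.Ioi (0:ℝ),
          (Real.sin x / x - genTranslation 2 (fun s => Real.sin s / s) x t) /
            t ^ (1 + 2 * α) =
      (2 : ℝ) ^ (2 * α) * Real.Gamma (3/2 + α) * Real.Gamma (1/2 + α) /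
          (Real.Gamma (3/2) * Real.Gamma (2 * α + 2)) * (Real.sin x / x) := by
  have hintegrand : ∀ᵐ t ∂volume.restrict (Ioi 0),
      (sin x / x - genTranslation 2 (fun s => sin s / s) x t) / t ^ (1 + 2 * α)
        = sin x / x * ((1 - sin t / t) / t ^ (1 + 2 * α)) := by
    filter_upwards [ae_restrict_mem measurableSet_Ioi, Measure.ae_ne _ |x|] with t ht htx
    have ht : 0 < t := ht
    rw [genTranslation_two_sinc hx ht.ne' (by rwa [abs_of_pos ht, ne_comm])]
    ring
  have hsin : sin (π * α) ≠ 0 :=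
    (sin_pos_of_pos_of_lt_pi (by positivity) (by nlinarith [pi_pos])).ne'
  rw [integral_congr_ae hintegrand, integral_const_mul, integral_one_sub_sinc_div_rpow hα hα',
    dConst, mul_comm α π, rpow_add two_pos, rpow_one]
  norm_num
  field_simp
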